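/- Let L ≤ 0 ≤ R, q_f ∈ [L, R], and let L_P, R_P, p_{f'} be reals with |R - R_P| ≤ M, |L - L_P| ≤ M, |p_{f'} - q_{f'}| ≤ M, |q_{f'} - q_f| ≤ Δ, and R_P - p_{f'} ≤ p_{f'} - L_P. Then R - q_f ≤ (1/2)(R - L) + 2M + Δ, i.e., writing M = η(|L|+|R|) and Δ = δ(|L|+|R|), d = |R - q_f| ≤ (|L|+|R|)(1/2 + δ + 2η). -/
import Mathlib


theorem stmt_9 (L R qf qf' LP RP pf' M Δ : ℝ)
    (hL : L ≤ 0) (hR : 0 ≤ R) (hqfL : L ≤ qf) (hqfR : qf ≤ R)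
    (hRP : |R - RP| ≤ M) (hLP : |L - LP| ≤ M)
    (hpf : |pf' - qf'| ≤ M) (hΔ : |qf' - qf| ≤ Δ)
    (hleft : RP - pf' ≤ pf' - LP) :
    R - qf ≤ (1 / 2) * (R - L) + 2 * M + Δ := by
  rw [abs_le] at hRP hLP hpf hΔ
  linarith [hRP.1, hLP.1, hpf.2, hΔ.1]
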